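/- Let V = ℂe_0 ⊕ V_1 ⊕ V_2 be a graded vector space (r = 2 case), Π_1 : T → V_1 a linear isomorphism from a vector space T, and Π_2 : Sym²T → V_2 a linear map. Define f : T → ℙV by f(w) = [e_0 + Π_1(w) + Π_2(w,w)], and a ℂ*-action on V acting with weight 0 on ℂe_0, weight −1 on V_1, and weight w_2 < −1 on V_2. For nonzero w ∈ T, the orbit closure of f(w) under the ℂ*-action is the line through [e_0] and [Π_1(w)] (i.e., is a line in ℙV) if and only if Π_2(w,w) = 0. -/
import Mathlib


/-- For `V = ℂe₀ ⊕ V₁ ⊕ V₂`, `P1 : T ≅ V₁`, `P2 : Sym²T → V₂`, and the `ℂ*`-orbit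
`{e₀ + z·P1(w) + z^{−w₂}·P2(w,w) : z ∈ ℂ*}` of `f(w)` (weights `0, −1, w₂ < −1`), the
orbit closure is the line through `[e₀]` and `[P1(w)]` — i.e. the orbit spans exactly
the plane `⟨e₀, P1(w)⟩` — if and only if `P2(w,w) = 0`. -/
theorem orbit_closure_is_line_iff {V T : Type*} [AddCommGroup V] [Module ℂ V]
    [AddCommGroup T] [Module ℂ T]
    (V₀ V₁ V₂ : Submodule ℂ V)
    (hindep : ∀ a ∈ V₀, ∀ b ∈ V₁, ∀ c ∈ V₂, a + b + c = 0 → a = 0 ∧ b = 0 ∧ c = 0)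
    (e₀ : V) (he₀ : e₀ ∈ V₀) (he₀ne : e₀ ≠ 0)
    (P1 : T →ₗ[ℂ] V) (hP1inj : Function.Injective P1) (hP1 : LinearMap.range P1 ≤ V₁)
    (P2 : T →ₗ[ℂ] T →ₗ[ℂ] V) (hP2sym : ∀ u v : T, P2 u v = P2 v u)
    (hP2 : ∀ u v : T, P2 u v ∈ V₂)
    (w₂ : ℤ) (hw₂ : w₂ < -1)
    (w : T) (hw : w ≠ 0) :
    Submodule.span ℂ
        {v : V | ∃ z : ℂˣ,
          v = e₀ + (z : ℂ) • P1 w + ((z ^ (-w₂) : ℂˣ) : ℂ) • P2 w w}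
      = Submodule.span ℂ {e₀, P1 w}
    ↔ P2 w w = 0 := by
  constructor
  · intro hspan
    have hmem : e₀ + (1 : ℂ) • P1 w + (1 : ℂ) • P2 w w ∈
        Submodule.span ℂ {e₀, P1 w} := by
      rw [← hspan]
      exact Submodule.subset_span ⟨1, by simp⟩
    rw [Submodule.mem_span_pair] at hmem
    obtain ⟨a, b, hab⟩ := hmem
    have key : ((a - 1) • e₀) + ((b - 1) • P1 w) + (-(P2 w w)) = 0 := by
      linear_combination (norm := module) hab
    have h := hindep _ (V₀.smul_mem _ he₀) _ (V₁.smul_mem _ (hP1 ⟨w, rfl⟩))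
      _ (V₂.neg_mem (hP2 w w)) key
    exact neg_eq_zero.mp h.2.2
  · intro h0
    rw [h0]
    simp only [smul_zero, add_zero]
    apply le_antisymm
    · rw [Submodule.span_le]
      rintro v ⟨z, rfl⟩
      exact Submodule.add_mem _
        (Submodule.subset_span (by simp))
        (Submodule.smul_mem _ _ (Submodule.subset_span (by simp)))
    · have m : ∀ z : ℂˣ, e₀ + (z : ℂ) • P1 w ∈
          Submodule.span ℂ {v : V | ∃ z : ℂˣ, v = e₀ + (z : ℂ) • P1 w} :=
        fun z => Submodule.subset_span ⟨z, rfl⟩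
      have h1 := m 1
      have h2 := m (Units.mk0 2 two_ne_zero)
      have he : e₀ = (2 : ℂ) • (e₀ + ((1 : ℂˣ) : ℂ) • P1 w)
          - (e₀ + ((Units.mk0 2 two_ne_zero : ℂˣ) : ℂ) • P1 w) := by
        simp [smul_add, smul_smul, two_smul]
      have hp : P1 w = (e₀ + ((Units.mk0 2 two_ne_zero : ℂˣ) : ℂ) • P1 w)
          - (e₀ + ((1 : ℂˣ) : ℂ) • P1 w) := by
        simp [two_smul]
      rw [Submodule.span_le]
      refine Set.insert_subset_iff.mpr ⟨?_, Set.singleton_subset_iff.mpr ?_⟩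
      · have := Submodule.sub_mem _ (Submodule.smul_mem _ (2 : ℂ) h1) h2
        rwa [← he] at this
      · have := Submodule.sub_mem _ h2 h1
        rwa [← hp] at this
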